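/- arXiv:2303.12919 — 2 statements merged into one kernel-verified Lean document; each statement's English description precedes it below -/
import Mathlib

section
/- Let M be a real n×n matrix diagonalizable over ℂ with all eigenvalues λ satisfying |λ| ≤ 1, and b ∈ ℝⁿ in the range of I - M. Then for every x₀ ∈ ℝⁿ the sequence x_m = Mᵐ x₀ + Σ_{k=0}^{m-1} Mᵏ b is bounded. -/
/-!
Writing `b = (1 - M) y`, the geometric sum telescopes: `x_m = Mᵐ (x₀ - y) + y`. So it suffices
that the powers of `M` are bounded. Over `ℂ`, `M = P D P⁻¹` with the entries of `D` eigenvalues of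
`M`, hence of modulus at most one, so in the `L^∞` operator norm `‖Mᵐ‖ = ‖P Dᵐ P⁻¹‖ ≤ ‖P‖ ‖P⁻¹‖`.
-/

open Matrix

open scoped Matrix.Norms.Operator

namespace Matrix

theorem linfty_opNorm_map_eq {m n α β : Type*} [Fintype m] [Fintype n] [SeminormedAddCommGroup α]
    [SeminormedAddCommGroup β] (A : Matrix m n α) (f : α → β) (hf : ∀ a, ‖f a‖ = ‖a‖) :
    ‖A.map f‖ = ‖A‖ := by
  have hnn (a : α) : ‖f a‖₊ = ‖a‖₊ := NNReal.eq (hf a)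
  simp only [linfty_opNorm_def, map_apply, hnn]

variable {n : Type*} [Fintype n] [DecidableEq n]

theorem isRoot_charpoly_of_eq_conj_diagonal {R : Type*} [CommRing R] {A P : Matrix n n R}
    {D : n → R} (hP : IsUnit P.det) (hA : A = P * diagonal D * P⁻¹) (i : n) :
    A.charpoly.IsRoot (D i) := by
  obtain ⟨u, rfl⟩ := P.isUnit_iff_isUnit_det.mpr hP
  rw [hA, charpoly_units_conj, charpoly_diagonal, Polynomial.IsRoot,
    Polynomial.eval_prod]
  exact Finset.prod_eq_zero (Finset.mem_univ i) (by simp)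

theorem conj_diagonal_pow {R : Type*} [CommRing R] {P : Matrix n n R} (hP : IsUnit P.det)
    (D : n → R) (m : ℕ) : (P * diagonal D * P⁻¹) ^ m = P * diagonal (D ^ m) * P⁻¹ := by
  obtain ⟨u, rfl⟩ := P.isUnit_iff_isUnit_det.mpr hP
  rw [← coe_units_inv, Units.conj_pow, diagonal_pow]

theorem pow_mulVec_add_geom_sum_mulVec {R : Type*} [Ring R] (M : Matrix n n R)
    (x y : n → R) (m : ℕ) :
    M ^ m *ᵥ x + (∑ k ∈ Finset.range m, M ^ k) *ᵥ ((1 - M) *ᵥ y) = M ^ m *ᵥ (x - y) + y := by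
  have hgeom : (∑ k ∈ Finset.range m, M ^ k) * (1 - M) = 1 - M ^ m := by
    rw [← neg_sub, mul_neg, geom_sum_mul, neg_sub]
  rw [mulVec_mulVec, hgeom, sub_mulVec, one_mulVec, mulVec_sub]
  abel

theorem linfty_opNorm_conj_diagonal_pow_le {𝕜 : Type*} [NormedField 𝕜] {P : Matrix n n 𝕜}
    (hP : IsUnit P.det) {D : n → 𝕜} (hD : ∀ i, ‖D i‖ ≤ 1) (m : ℕ) :
    ‖(P * diagonal D * P⁻¹) ^ m‖ ≤ ‖P‖ * ‖P⁻¹‖ := by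
  have hDm : ‖diagonal (D ^ m)‖ ≤ 1 := by
    rw [linfty_opNorm_diagonal, pi_norm_le_iff_of_nonneg zero_le_one]
    intro i
    rw [Pi.pow_apply, norm_pow]
    exact pow_le_one₀ (norm_nonneg _) (hD i)
  calc ‖(P * diagonal D * P⁻¹) ^ m‖
      ≤ ‖P‖ * ‖diagonal (D ^ m)‖ * ‖P⁻¹‖ := by
        rw [conj_diagonal_pow hP]
        exact (norm_mul_le _ _).trans (by gcongr; exact norm_mul_le _ _)
    _ ≤ ‖P‖ * ‖P⁻¹‖ := by
        simpa using mul_le_mul_of_nonneg_right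
          (mul_le_of_le_one_right (norm_nonneg P) hDm) (norm_nonneg P⁻¹)

end Matrix

theorem stmt_8 (n : ℕ) (M : Matrix (Fin n) (Fin n) ℝ)
    (hdiag : ∃ (P : Matrix (Fin n) (Fin n) ℂ) (D : Fin n → ℂ),
      IsUnit P.det ∧ M.map (algebraMap ℝ ℂ) = P * Matrix.diagonal D * P⁻¹)
    (hle : ∀ lam : ℂ, ((M.map (algebraMap ℝ ℂ)).charpoly).IsRoot lam → ‖lam‖ ≤ 1)
    (b : Fin n → ℝ)
    (hb : b ∈ Set.range (fun x : Fin n → ℝ => ((1 : Matrix (Fin n) (Fin n) ℝ) - M) *ᵥ x)) :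
    ∀ x₀ : Fin n → ℝ, ∃ C : ℝ, ∀ m : ℕ,
      ‖(M ^ m) *ᵥ x₀ + (∑ k ∈ Finset.range m, M ^ k) *ᵥ b‖ ≤ C := by
  obtain ⟨P, D, hP, hM⟩ := hdiag
  obtain ⟨y, rfl⟩ := hb
  intro x₀
  have hD : ∀ i, ‖D i‖ ≤ 1 := fun i => hle _ (isRoot_charpoly_of_eq_conj_diagonal hP hM i)
  have hpow (m : ℕ) : ‖M ^ m‖ ≤ ‖P‖ * ‖P⁻¹‖ := by
    rw [← linfty_opNorm_map_eq (M ^ m) (algebraMap ℝ ℂ) Complex.norm_real, Matrix.map_pow, hM]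
    exact linfty_opNorm_conj_diagonal_pow_le hP hD m
  refine ⟨‖P‖ * ‖P⁻¹‖ * ‖x₀ - y‖ + ‖y‖, fun m => ?_⟩
  rw [pow_mulVec_add_geom_sum_mulVec]
  calc ‖M ^ m *ᵥ (x₀ - y) + y‖ ≤ ‖M ^ m‖ * ‖x₀ - y‖ + ‖y‖ :=
        (norm_add_le _ _).trans (by gcongr; exact linfty_opNorm_mulVec _ _)
    _ ≤ ‖P‖ * ‖P⁻¹‖ * ‖x₀ - y‖ + ‖y‖ := by gcongr; exact hpow m
end

section
/- Assume ∫₀ᵖ a = 0, g(-∞) < g(x) < g(∞) for all x, and ∫₀ᵖ μ(t) f(t) dt ≥ g(∞) ∫₀ᵖ μ(t) dt, where μ(t) = exp(∫₀ᵗ a). Then every solution x of x' + a(t)x + g(x) = f(t) satisfies x((m+1)p) > x(mp) for all integers m ≥ 0, and x(t) → ∞ as t → ∞. -/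
/-!
The integrating factor `μ t = exp (∫₀ᵗ a)` is `p`-periodic because `a` has mean zero, and
`y = μ x` satisfies `y' = μ (f - g ∘ x)`. Integrating over a period and using the hypothesis on
`∫ μ f` gives `y (t + p) - y t ≥ ∫ₜ^{t+p} μ (g(∞) - g ∘ x) > 0`; since `μ = 1` at multiples of `p`,
this is the monotonicity of `x (m p)`. If `y (m p)` stayed bounded, then, `y` being Lipschitz,
`x` would be bounded above on `[0, ∞)`, so `g ∘ x` would stay below some `c < g(∞)` and each
period would add at least `p · min μ · (g(∞) - c)` to `y`, which is absurd. Hence `y (m p) → ∞`,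
so `y → ∞`, and `x ≥ y / max μ → ∞`.
-/

open intervalIntegral Filter Function Set Topology

lemma periodic_integral_of_integral_eq_zero {a : ℝ → ℝ} {p : ℝ} (ha : Continuous a)
    (hap : Periodic a p) (h0 : ∫ s in (0:ℝ)..p, a s = 0) :
    Periodic (fun t => ∫ s in (0:ℝ)..t, a s) p := fun t => by
  simp only [hap.intervalIntegral_add_eq_add 0 t ha.intervalIntegrable, zero_add, h0, add_zero]

lemma hasDerivAt_exp_integral_mul {a x F : ℝ → ℝ} (ha : Continuous a)
    (hx : ∀ t, HasDerivAt x (F t - a t * x t) t) (t : ℝ) :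
    HasDerivAt (fun t => Real.exp (∫ s in (0:ℝ)..t, a s) * x t)
      (Real.exp (∫ s in (0:ℝ)..t, a s) * F t) t :=
  ((ha.integral_hasStrictDerivAt 0 t).hasDerivAt.exp.mul (hx t)).congr_deriv (by ring)

lemma Function.Periodic.exists_pos_forall_le {h : ℝ → ℝ} {p : ℝ} (hper : Periodic h p)
    (hp : p ≠ 0) (hc : Continuous h) (hpos : ∀ t, 0 < h t) : ∃ m > 0, ∀ t, m ≤ h t := by
  obtain ⟨_, ⟨t₀, rfl⟩, hmin⟩ :=
    (hper.compact_of_continuous hp hc).exists_isLeast (range_nonempty h)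
  exact ⟨h t₀, hpos t₀, fun t => hmin ⟨t, rfl⟩⟩

lemma exists_lt_forall_le_of_tendsto_atBot {g : ℝ → ℝ} {l c : ℝ} (hg : Continuous g)
    (hgl : Tendsto g atBot (𝓝 l)) (hlc : l < c) (hgc : ∀ u, g u < c) (M : ℝ) :
    ∃ c' < c, ∀ u ≤ M, g u ≤ c' := by
  obtain ⟨R, hR⟩ := eventually_atBot.1 (hgl.eventually_lt_const (by linarith : l < (l + c) / 2))
  obtain ⟨u₀, -, hu₀⟩ := isCompact_Icc.exists_isMaxOn
    (nonempty_Icc.2 (min_le_right R M)) hg.continuousOn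
  refine ⟨max ((l + c) / 2) (g u₀), max_lt (by linarith) (hgc u₀), fun u hu => ?_⟩
  rcases le_total u (min R M) with h | h
  · have := hR u (h.trans (min_le_left R M))
    exact le_max_of_le_left (by linarith)
  · exact le_max_of_le_right (hu₀ ⟨h, hu⟩)

lemma integral_le_sub_of_hasDerivAt_add {y φ ψ : ℝ → ℝ} {p : ℝ}
    (hy : ∀ t, HasDerivAt y (φ t + ψ t) t) (hφ : Continuous φ) (hψ : Continuous ψ)
    (hφp : Periodic φ p) (hφ0 : 0 ≤ ∫ t in (0:ℝ)..p, φ t) (t : ℝ) :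
    ∫ u in t..t + p, ψ u ≤ y (t + p) - y t := by
  rw [← integral_eq_sub_of_hasDerivAt (fun u _ => hy u) ((hφ.add hψ).intervalIntegrable _ _),
    integral_add (hφ.intervalIntegrable _ _) (hψ.intervalIntegrable _ _),
    hφp.intervalIntegral_add_eq t 0, zero_add]
  linarith

lemma integral_mul_sub_le_sub {y μ f G : ℝ → ℝ} {p c : ℝ}
    (hy : ∀ t, HasDerivAt y (μ t * (f t - G t)) t) (hμc : Continuous μ) (hfc : Continuous f)
    (hGc : Continuous G) (hμp : Periodic μ p) (hfp : Periodic f p)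
    (hc : c * ∫ t in (0:ℝ)..p, μ t ≤ ∫ t in (0:ℝ)..p, μ t * f t) (t : ℝ) :
    ∫ u in t..t + p, μ u * (c - G u) ≤ y (t + p) - y t := by
  have hmean : ∫ t in (0:ℝ)..p, μ t * (f t - c)
      = (∫ t in (0:ℝ)..p, μ t * f t) - (∫ t in (0:ℝ)..p, μ t) * c := by
    rw [← integral_mul_const, ← integral_sub (f := fun t => μ t * f t) (g := fun t => μ t * c)
      ((hμc.mul hfc).intervalIntegrable _ _) ((hμc.mul continuous_const).intervalIntegrable _ _)]
    simp only [mul_sub]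
  exact integral_le_sub_of_hasDerivAt_add (φ := fun t => μ t * (f t - c))
    (ψ := fun t => μ t * (c - G t))
    (fun t => (hy t).congr_deriv (by ring)) (hμc.mul (hfc.sub continuous_const))
    (hμc.mul (continuous_const.sub hGc)) (fun t => by simp only [hμp t, hfp t])
    (by linarith) t

lemma exists_abs_mul_sub_le {μ f G : ℝ → ℝ} {p l c : ℝ} (hp : p ≠ 0) (hμc : Continuous μ)
    (hμp : Periodic μ p) (hfc : Continuous f) (hfp : Periodic f p) (hG : ∀ t, l < G t ∧ G t < c) :
    ∃ C, ∀ t, |μ t * (f t - G t)| ≤ C := by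
  obtain ⟨Cμ, hCμ⟩ := (hμp.isBounded_of_continuous hp hμc).exists_norm_le
  obtain ⟨Cf, hCf⟩ := (hfp.isBounded_of_continuous hp hfc).exists_norm_le
  refine ⟨Cμ * (Cf + max |l| |c|), fun t => ?_⟩
  rw [abs_mul]
  exact mul_le_mul (hCμ _ ⟨t, rfl⟩) ((abs_sub _ _).trans (add_le_add (hCf _ ⟨t, rfl⟩)
    (abs_le_max_abs_abs (hG t).1.le (hG t).2.le))) (abs_nonneg _)
    ((norm_nonneg _).trans (hCμ _ ⟨0, rfl⟩))

lemma integral_mul_sub_comp_pos {μ x g : ℝ → ℝ} {p c : ℝ} (hp : 0 < p) (hμc : Continuous μ)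
    (hxc : Continuous x) (hg : Continuous g) (hμpos : ∀ t, 0 < μ t) (hgc : ∀ u, g u < c)
    (t : ℝ) : 0 < ∫ u in t..t + p, μ u * (c - g (x u)) :=
  intervalIntegral_pos_of_pos
    ((hμc.mul (continuous_const.sub (hg.comp hxc))).intervalIntegrable _ _)
    (fun u => mul_pos (hμpos u) (sub_pos.2 (hgc (x u)))) (by linarith)

lemma lipschitzWith_of_hasDerivAt_of_abs_le {y y' : ℝ → ℝ} {C : ℝ}
    (hy : ∀ t, HasDerivAt y (y' t) t) (hC : ∀ t, |y' t| ≤ C) : LipschitzWith C.toNNReal y :=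
  lipschitzWith_of_nnnorm_deriv_le (fun t => (hy t).differentiableAt) fun t => by
    rw [(hy t).deriv, ← NNReal.coe_le_coe, coe_nnnorm, Real.coe_toNNReal']
    exact le_max_of_le_left (hC t)

lemma LipschitzWith.abs_sub_floor_div_mul_le {y : ℝ → ℝ} {C : NNReal} {p t : ℝ}
    (hy : LipschitzWith C y) (hp : 0 < p) (ht : 0 ≤ t) :
    |y t - y (⌊t / p⌋₊ * p)| ≤ C * p := by
  have hle : ⌊t / p⌋₊ * p ≤ t := (le_div_iff₀ hp).1 (Nat.floor_le (div_nonneg ht hp.le))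
  have hlt : t < ⌊t / p⌋₊ * p + p := by
    have := Nat.lt_floor_add_one (t / p)
    rw [div_lt_iff₀ hp] at this
    linarith
  calc |y t - y (⌊t / p⌋₊ * p)| = dist (y t) (y (⌊t / p⌋₊ * p)) := (Real.dist_eq _ _).symm
    _ ≤ C * dist t (⌊t / p⌋₊ * p) := hy.dist_le_mul _ _
    _ ≤ C * p := by
      rw [Real.dist_eq, abs_of_nonneg (by linarith)]
      gcongr
      linarith

lemma LipschitzWith.tendsto_atTop_of_tendsto_nat_mul {y : ℝ → ℝ} {C : NNReal} {p : ℝ}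
    (hy : LipschitzWith C y) (hp : 0 < p)
    (hlim : Tendsto (fun m : ℕ => y (m * p)) atTop atTop) : Tendsto y atTop atTop := by
  have hfloor : Tendsto (fun t => y (⌊t / p⌋₊ * p) - C * p) atTop atTop :=
    tendsto_atTop_add_const_right _ _
      (hlim.comp (tendsto_nat_floor_atTop.comp (tendsto_id.atTop_div_const hp)))
  refine tendsto_atTop_mono' _ ?_ hfloor
  filter_upwards [eventually_ge_atTop 0] with t ht
  linarith [abs_le.1 (hy.abs_sub_floor_div_mul_le hp ht)]

lemma LipschitzWith.le_add_of_forall_nat_mul_le {y : ℝ → ℝ} {C : NNReal} {p b t : ℝ}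
    (hy : LipschitzWith C y) (hp : 0 < p) (hb : ∀ m : ℕ, y (m * p) ≤ b) (ht : 0 ≤ t) :
    y t ≤ b + C * p := by
  linarith [abs_le.1 (hy.abs_sub_floor_div_mul_le hp ht), hb ⌊t / p⌋₊]

lemma add_nat_mul_le_of_forall_add_le {y : ℝ → ℝ} {p ε : ℝ}
    (h : ∀ m : ℕ, y (m * p) + ε ≤ y (m * p + p)) (m : ℕ) : y 0 + m * ε ≤ y (m * p) := by
  induction m with
  | zero => simp
  | succ m ih =>
    push_cast
    rw [add_one_mul, add_one_mul]
    linarith [h m]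

lemma tendsto_nat_mul_atTop_of_integral_le {x μ g : ℝ → ℝ} {p μ₀ gm gp : ℝ} {C : NNReal}
    (hp : 0 < p) (hxc : Continuous x) (hμc : Continuous μ) (hμ₀ : 0 < μ₀)
    (hμ₀le : ∀ t, μ₀ ≤ μ t) (hg : Continuous g) (hgm : Tendsto g atBot (𝓝 gm))
    (hgb : ∀ u, gm < g u ∧ g u < gp) (hlip : LipschitzWith C (μ * x))
    (hinc : ∀ t, ∫ u in t..t + p, μ u * (gp - g (x u)) ≤ (μ * x) (t + p) - (μ * x) t) :
    Tendsto (fun m : ℕ => (μ * x) (m * p)) atTop atTop := by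
  have hμpos : ∀ t, 0 < μ t := fun t => hμ₀.trans_le (hμ₀le t)
  have hψc : Continuous fun u => μ u * (gp - g (x u)) :=
    hμc.mul (continuous_const.sub (hg.comp hxc))
  have hmono : Monotone fun m : ℕ => (μ * x) (m * p) := monotone_nat_of_le_succ fun m => by
    have hpos := integral_mul_sub_comp_pos hp hμc hxc hg hμpos (fun u => (hgb u).2) (m * p)
    push_cast
    rw [add_one_mul]
    linarith [hinc (m * p)]
  refine tendsto_atTop_atTop_of_monotone' hmono fun ⟨b, hb⟩ => ?_
  have hb' : ∀ m : ℕ, (μ * x) (m * p) ≤ b := fun m => hb ⟨m, rfl⟩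
  set M := max ((b + C * p) / μ₀) 0
  have hxM : ∀ t, 0 ≤ t → x t ≤ M := by
    intro t ht
    have hy : μ t * x t ≤ b + C * p := hlip.le_add_of_forall_nat_mul_le hp hb' ht
    rcases le_or_gt (x t) 0 with hx | hx
    · exact hx.trans (le_max_right _ _)
    · exact le_max_of_le_left ((le_div_iff₀ hμ₀).2 (by nlinarith [hμ₀le t]))
  obtain ⟨c, hc, hgc⟩ := exists_lt_forall_le_of_tendsto_atBot hg hgm
    ((hgb 0).1.trans (hgb 0).2) (fun u => (hgb u).2) M
  have hstep (m : ℕ) : (μ * x) (m * p) + p * (μ₀ * (gp - c)) ≤ (μ * x) (m * p + p) := by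
    have hm0 : (0:ℝ) ≤ m * p := by positivity
    have hle : ∫ _ in (m * p)..(m * p + p), μ₀ * (gp - c)
        ≤ ∫ u in (m * p)..(m * p + p), μ u * (gp - g (x u)) :=
      integral_mono_on (by linarith) intervalIntegrable_const (hψc.intervalIntegrable _ _)
        fun u hu => mul_le_mul (hμ₀le u) (by linarith [hgc _ (hxM u (hm0.trans hu.1))])
          (by linarith) (hμpos u).le
    rw [integral_const, smul_eq_mul, add_sub_cancel_left] at hle
    linarith [hinc (m * p)]
  obtain ⟨m, hm⟩ := exists_nat_gt ((b - (μ * x) 0) / (p * (μ₀ * (gp - c))))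
  rw [div_lt_iff₀ (mul_pos hp (mul_pos hμ₀ (sub_pos.2 hc)))] at hm
  linarith [add_nat_mul_le_of_forall_add_le hstep m, hb' m]

lemma tendsto_atTop_of_mul_tendsto_atTop {x μ : ℝ → ℝ} {μ₁ : ℝ} (hμpos : ∀ t, 0 < μ t)
    (hμ₁ : ∀ t, μ t ≤ μ₁) (hy : Tendsto (μ * x) atTop atTop) : Tendsto x atTop atTop := by
  refine tendsto_atTop_mono' _ ?_ (hy.atTop_div_const ((hμpos 0).trans_le (hμ₁ 0)))
  filter_upwards [hy.eventually_ge_atTop 0] with t ht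
  calc (μ * x) t / μ₁ ≤ (μ * x) t / μ t := div_le_div_of_nonneg_left ht (hμpos t) (hμ₁ t)
    _ = x t := mul_div_cancel_left₀ _ (hμpos t).ne'

theorem stmt_11_general (p : ℝ) (hp : 0 < p) (a f g : ℝ → ℝ)
    (ha : Continuous a) (hf : Continuous f) (hg : Continuous g)
    (hap : ∀ t, a (t + p) = a t) (hfp : ∀ t, f (t + p) = f t)
    (hina : ∫ s in (0:ℝ)..p, a s = 0)
    (μ : ℝ → ℝ) (hμ : ∀ t, μ t = Real.exp (∫ s in (0:ℝ)..t, a s))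
    (gm gp : ℝ) (hgm : Tendsto g atBot (nhds gm))
    (hgb : ∀ x : ℝ, gm < g x ∧ g x < gp)
    (hge : (∫ t in (0:ℝ)..p, μ t * f t) ≥ gp * ∫ t in (0:ℝ)..p, μ t) :
    ∀ x : ℝ → ℝ, (∀ t, HasDerivAt x (f t - a t * x t - g (x t)) t) →
      (∀ m : ℕ, x ((m : ℝ) * p) < x (((m : ℝ) + 1) * p)) ∧
      Tendsto x atTop atTop := by
  intro x hx
  have hxc : Continuous x := continuous_iff_continuousAt.2 fun t => (hx t).continuousAt
  have hμ_eq : μ = Real.exp ∘ fun t => ∫ s in (0:ℝ)..t, a s := funext hμ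
  have hμp : Periodic μ p := hμ_eq ▸ (periodic_integral_of_integral_eq_zero ha hap hina).comp _
  have hμc : Continuous μ :=
    hμ_eq ▸ Real.continuous_exp.comp (continuous_primitive ha.intervalIntegrable 0)
  have hμpos : ∀ t, 0 < μ t := fun t => hμ t ▸ Real.exp_pos _
  have hy : ∀ t, HasDerivAt (μ * x) (μ t * (f t - g (x t))) t := by
    rw [hμ_eq]
    exact hasDerivAt_exp_integral_mul ha fun t => (hx t).congr_deriv (by ring)
  have hinc := integral_mul_sub_le_sub hy hμc hf (hg.comp hxc) hμp hfp hge
  obtain ⟨C, hC⟩ := exists_abs_mul_sub_le hp.ne' hμc hμp hf hfp fun t => hgb (x t)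
  have hlip := lipschitzWith_of_hasDerivAt_of_abs_le hy hC
  obtain ⟨μ₀, hμ₀, hμ₀le⟩ := hμp.exists_pos_forall_le hp.ne' hμc hμpos
  obtain ⟨μ₁, hμ₁⟩ := (hμp.compact_of_continuous hp.ne' hμc).bddAbove
  refine ⟨fun m => ?_, tendsto_atTop_of_mul_tendsto_atTop hμpos (fun t => hμ₁ ⟨t, rfl⟩)
    (hlip.tendsto_atTop_of_tendsto_nat_mul hp
      (tendsto_nat_mul_atTop_of_integral_le hp hxc hμc hμ₀ hμ₀le hg hgm hgb hlip hinc))⟩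
  have hμ1 : μ (m * p) = 1 := by rw [hμp.nat_mul_eq, hμ, integral_same, Real.exp_zero]
  have hstep := hinc (m * p)
  have hpos := integral_mul_sub_comp_pos hp hμc hxc hg hμpos (fun u => (hgb u).2) (m * p)
  simp only [Pi.mul_apply, hμp (m * p), hμ1, one_mul] at hstep
  rw [add_one_mul]
  linarith

theorem stmt_11 (p : ℝ) (hp : 0 < p) (a f g : ℝ → ℝ)
    (ha : Continuous a) (hf : Continuous f) (hg : Continuous g)
    (hap : ∀ t, a (t + p) = a t) (hfp : ∀ t, f (t + p) = f t)
    (hina : ∫ s in (0:ℝ)..p, a s = 0)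
    (μ : ℝ → ℝ) (hμ : ∀ t, μ t = Real.exp (∫ s in (0:ℝ)..t, a s))
    (gm gp : ℝ) (hgm : Tendsto g atBot (nhds gm)) (hgp : Tendsto g atTop (nhds gp))
    (hgb : ∀ x : ℝ, gm < g x ∧ g x < gp)
    (hge : (∫ t in (0:ℝ)..p, μ t * f t) ≥ gp * ∫ t in (0:ℝ)..p, μ t) :
    ∀ x : ℝ → ℝ, (∀ t, HasDerivAt x (f t - a t * x t - g (x t)) t) →
      (∀ m : ℕ, x ((m : ℝ) * p) < x (((m : ℝ) + 1) * p)) ∧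
      Tendsto x atTop atTop :=
  stmt_11_general p hp a f g ha hf hg hap hfp hina μ hμ gm gp hgm hgb hge
end
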